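/- Every perfectly 2-divisible (i.e., perfectly divisible) graph G with clique number ω satisfies χ(G) ≤ ω(ω+1)/2. -/

import Mathlib

open SimpleGraph

universe u v

/-- A graph is perfect if every induced subgraph has chromatic number
equal to its clique number. -/
def IsPerfect {V : Type u} (G : SimpleGraph V) : Prop :=
  ∀ s : Set V, (G.induce s).chromaticNumber = ((G.induce s).cliqueNum : ℕ∞)

/-- A set of vertices is stable (independent) if no two of its vertices are adjacent. -/
def IsStableSet {V : Type u} (G : SimpleGraph V) (s : Set V) : Prop :=
  s.Pairwise fun x y => ¬ G.Adj x y

/-- `PerfectlyDiv k G`: `G` is perfectly `k`-divisible.  A graph is perfectly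
`1`-divisible iff it is perfect; for `k ≥ 2`, `G` is perfectly `k`-divisible iff for every
induced subgraph `H` of `G`, either `V(H)` is a stable set or it admits a partition
into `X₁, X₂` with `ω(H[X₁]) < ω(H)` and `H[X₂]` perfectly `(k-1)`-divisible.
(The value at `k = 0` is junk.) -/
def PerfectlyDiv : ℕ → {V : Type u} → SimpleGraph V → Prop
  | 0, _, _ => True
  | 1, _, G => IsPerfect G
  | (k+2), _V, G => ∀ s : Set _V,
      IsStableSet (G.induce s) Set.univ ∨
      ∃ X1 X2 : Set ↥s, X1 ∩ X2 = ∅ ∧ X1 ∪ X2 = Set.univ ∧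
        ((G.induce s).induce X1).cliqueNum < (G.induce s).cliqueNum ∧
        PerfectlyDiv (k+1) ((G.induce s).induce X2)

/-- `G` contains no induced subgraph isomorphic to `H`. -/
def IndFree {V : Type u} {W : Type v} (G : SimpleGraph V) (H : SimpleGraph W) : Prop :=
  ¬ ∃ s : Set V, Nonempty (H ≃g G.induce s)

/-- The stability (independence) number of a graph. -/
noncomputable def indepNum {V : Type u} (G : SimpleGraph V) : ℕ :=
  sSup {n | ∃ s : Finset V, IsStableSet G ↑s ∧ s.card = n}

/-! Induction on the clique number, over the induced subgraphs `G[s]`. If `ω(G[s]) ≤ n + 1` and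
`G[s]` is not stable, split it into `X₁` with `ω(G[X₁]) ≤ n`, coloured with `C(n+1, 2)` colours by
induction, and a perfect `X₂`, coloured with `ω(G[X₂]) ≤ n + 1` colours; Pascal's rule
`C(n+1, 2) + (n+1) = C(n+2, 2)` closes the induction. -/

namespace SimpleGraph

variable {V W : Type*} {G : SimpleGraph V}

lemma Embedding.cliqueNum_le [Finite W] {H : SimpleGraph W} (f : G ↪g H) :
    G.cliqueNum ≤ H.cliqueNum := by
  obtain ⟨s, hs⟩ := G.exists_isNClique_cliqueNum
  have hclique : H.IsClique (s.map f.toEmbedding) := by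
    rw [Finset.coe_map]
    exact hs.isClique.map.mono ((map_le_iff_le_comap _ _ _).2 f.toHom.le_comap)
  simpa [hs.card_eq] using hclique.card_le_cliqueNum

lemma isEmpty_of_cliqueNum_eq_zero [Finite V] (h : G.cliqueNum = 0) : IsEmpty V :=
  ⟨fun v => by simpa [h] using IsClique.card_le_cliqueNum (G := G) (t := {v}) (tc := by simp)⟩

noncomputable def induceInduceIso (G : SimpleGraph V) (s : Set V) (t : Set s) :
    (G.induce s).induce t ≃g G.induce (Subtype.val '' t) where
  toEquiv := Equiv.Set.image Subtype.val t Subtype.val_injective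
  map_rel_iff' := Iff.rfl

lemma colorable_add_of_union_eq_univ {A B : Set V} (hAB : A ∪ B = Set.univ) {a b : ℕ}
    (hA : (G.induce A).Colorable a) (hB : (G.induce B).Colorable b) : G.Colorable (a + b) := by
  classical
  obtain ⟨cA⟩ := hA
  obtain ⟨cB⟩ := hB
  have mem_B : ∀ v, v ∉ A → v ∈ B := fun v hv =>
    (hAB ▸ Set.mem_univ v : v ∈ A ∪ B).resolve_left hv
  let c : G.Coloring (Fin a ⊕ Fin b) := Coloring.mk
    (fun v => if hv : v ∈ A then .inl (cA ⟨v, hv⟩) else .inr (cB ⟨v, mem_B v hv⟩))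
    (fun {u v} huv => by
      split_ifs with hu hv hv
      · exact fun h => cA.valid (v := ⟨u, hu⟩) (w := ⟨v, hv⟩) huv (Sum.inl_injective h)
      · exact Sum.inl_ne_inr
      · exact Sum.inr_ne_inl
      · exact fun h => cB.valid (v := ⟨u, mem_B u hu⟩) (w := ⟨v, mem_B v hv⟩) huv
          (Sum.inr_injective h))
  simpa using c.colorable

end SimpleGraph

section

variable {V : Type*} {G : SimpleGraph V}

lemma IsStableSet.colorable_one (h : IsStableSet G Set.univ) : G.Colorable 1 :=
  ⟨Coloring.mk (fun _ => 0) fun huv => absurd huv (h trivial trivial huv.ne)⟩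

lemma IsPerfect.colorable_cliqueNum [Finite V] (h : IsPerfect G) : G.Colorable G.cliqueNum := by
  have hUniv : (G.induce Set.univ).Colorable G.cliqueNum := by
    rw [← chromaticNumber_le_iff_colorable, h Set.univ]
    exact_mod_cast G.cliqueNum_induce_le Set.univ
  exact hUniv.of_hom G.induceUnivIso.symm.toHom

lemma PerfectlyDiv.colorable_induce_of_cliqueNum_le [Finite V] (hG : PerfectlyDiv 2 G)
    (n : ℕ) (s : Set V) (hs : (G.induce s).cliqueNum ≤ n) :
    (G.induce s).Colorable ((n + 1).choose 2) := by
  induction n generalizing s with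
  | zero =>
    have := isEmpty_of_cliqueNum_eq_zero (Nat.le_zero.1 hs)
    exact Colorable.of_isEmpty _
  | succ n ih =>
    rcases hG s with hstable | ⟨X₁, X₂, -, hcover, hX₁, hX₂⟩
    · exact hstable.colorable_one.mono (Nat.choose_pos (by omega))
    · have hcol₁ : ((G.induce s).induce X₁).Colorable ((n + 1).choose 2) := by
        refine (ih _ ?_).of_hom (induceInduceIso G s X₁).toHom
        have := (induceInduceIso G s X₁).symm.toEmbedding.cliqueNum_le
        omega
      have hcol₂ : ((G.induce s).induce X₂).Colorable (n + 1) :=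
        (IsPerfect.colorable_cliqueNum hX₂).mono ((cliqueNum_induce_le X₂).trans hs)
      rw [Nat.choose_succ_succ', Nat.choose_one_right, add_comm]
      exact colorable_add_of_union_eq_univ hcover hcol₁ hcol₂

end

theorem stmt_11 {V : Type u} [Fintype V] (G : SimpleGraph V)
    (hG : PerfectlyDiv 2 G) :
    G.chromaticNumber ≤ ((G.cliqueNum * (G.cliqueNum + 1)) / 2 : ℕ) := by
  have hcol := hG.colorable_induce_of_cliqueNum_le _ Set.univ (cliqueNum_induce_le _)
  rw [Nat.choose_two_right, Nat.add_sub_cancel, mul_comm] at hcol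
  exact (hcol.of_hom G.induceUnivIso.symm.toHom).chromaticNumber_le
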